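/- arXiv:1505.02537 — 7 statements merged into one kernel-verified Lean document; each statement's English description precedes it below -/
import Mathlib

section
/- Let M ∈ ℝ^{s×s} be symmetric, and define A'(τ,ζ) = φ(τ)ᵀ M φ(ζ) where φ(τ) = (1, τ, …, τ^{s−1})ᵀ. Let S ∈ ℝ^{N×N} be skew-symmetric and g : [0,1] → ℝ^N be any integrable function. Then ∫₀¹∫₀¹ A'(τ,ζ) g(τ)ᵀ S g(ζ) dζ dτ = 0. -/
/-! Writing `φ(τ) = (τ ^ i)ᵢ`, the integrand is the pairing `Φ(τ)ᵀ (M ⊗ S) Φ(ζ)` of the vectors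
`Φ(τ) = φ(τ) ⊗ g(τ)`, so the double integral factors as `vᵀ (M ⊗ S) v` with `v = ∫₀¹ Φ`. It vanishes
because the Kronecker product of a symmetric and a skew-symmetric matrix is skew-symmetric. -/

open MeasureTheory Matrix Kronecker

theorem dotProduct_mulVec_self_eq_zero {n R : Type*} [Fintype n] [CommRing R] [IsAddTorsionFree R]
    {A : Matrix n n R} (hA : Aᵀ = -A) (v : n → R) : v ⬝ᵥ A *ᵥ v = 0 := by
  refine self_eq_neg.mp ?_
  calc v ⬝ᵥ A *ᵥ v = v ⬝ᵥ Aᵀ *ᵥ v := by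
        rw [dotProduct_mulVec, dotProduct_comm, ← mulVec_transpose]
    _ = -(v ⬝ᵥ A *ᵥ v) := by rw [hA, neg_mulVec, dotProduct_neg]

theorem kronecker_transpose_eq_neg {m n R : Type*} [CommRing R] {M : Matrix m m R}
    {S : Matrix n n R} (hM : M.IsSymm) (hS : Sᵀ = -S) : (M ⊗ₖ S)ᵀ = -(M ⊗ₖ S) := by
  ext ⟨i, k⟩ ⟨j, l⟩
  rw [transpose_apply, neg_apply, kronecker_apply, kronecker_apply, hM.apply,
    ← transpose_apply S, hS, neg_apply, mul_neg]

theorem dotProduct_kronecker_mulVec {m n R : Type*} [Fintype m] [Fintype n] [CommSemiring R]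
    (M : Matrix m m R) (S : Matrix n n R) (a b : m → R) (u v : n → R) :
    (fun p : m × n => a p.1 * u p.2) ⬝ᵥ (M ⊗ₖ S) *ᵥ (fun p : m × n => b p.1 * v p.2)
      = (a ⬝ᵥ M *ᵥ b) * (u ⬝ᵥ S *ᵥ v) := by
  simp only [dotProduct, mulVec, kronecker_apply, Fintype.sum_prod_type, Finset.mul_sum,
    Finset.sum_mul]
  rw [Finset.sum_comm]
  refine Finset.sum_congr rfl fun k _ => ?_
  conv_rhs => rw [Finset.sum_comm]
  refine Finset.sum_congr rfl fun i _ => ?_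
  rw [Finset.sum_comm]
  refine Finset.sum_congr rfl fun l _ => Finset.sum_congr rfl fun j _ => by ring

theorem intervalIntegrable_pi_iff {ι E : Type*} [Fintype ι] [NormedAddCommGroup E]
    {f : ℝ → ι → E} {μ : Measure ℝ} {a b : ℝ} :
    IntervalIntegrable f μ a b ↔ ∀ i, IntervalIntegrable (f · i) μ a b := by
  simp only [intervalIntegrable_iff, IntegrableOn, integrable_pi_iff]

section
variable {E F G : Type*} [NormedAddCommGroup E] [NormedSpace ℝ E] [CompleteSpace E]
  [NormedAddCommGroup F] [NormedSpace ℝ F] [CompleteSpace F]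
  [NormedAddCommGroup G] [NormedSpace ℝ G] [CompleteSpace G]

theorem ContinuousLinearMap.intervalIntegral_intervalIntegral_apply_apply
    (B : E →L[ℝ] F →L[ℝ] G) {f : ℝ → E} {h : ℝ → F} {μ ν : Measure ℝ} {a b c d : ℝ}
    (hf : IntervalIntegrable f μ a b) (hh : IntervalIntegrable h ν c d) :
    ∫ x in a..b, ∫ y in c..d, B (f x) (h y) ∂ν ∂μ
      = B (∫ x in a..b, f x ∂μ) (∫ y in c..d, h y ∂ν) := by
  simp_rw [(B _).intervalIntegral_comp_comm hh]
  exact (B.flip _).intervalIntegral_comp_comm hf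
end

theorem intervalIntegral_intervalIntegral_dotProduct_mulVec {m n : Type*} [Fintype m] [Fintype n]
    (A : Matrix m n ℝ) {f : ℝ → m → ℝ} {h : ℝ → n → ℝ} {μ ν : Measure ℝ} {a b c d : ℝ}
    (hf : IntervalIntegrable f μ a b) (hh : IntervalIntegrable h ν c d) :
    ∫ x in a..b, ∫ y in c..d, f x ⬝ᵥ A *ᵥ h y ∂ν ∂μ
      = (∫ x in a..b, f x ∂μ) ⬝ᵥ A *ᵥ (∫ y in c..d, h y ∂ν) := by
  classical
  let B : (m → ℝ) →L[ℝ] (n → ℝ) →L[ℝ] ℝ :=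
    LinearMap.toContinuousLinearMap
      (LinearMap.toContinuousLinearMap.toLinearMap ∘ₗ toLinearMap₂' ℝ A)
  simpa [B, toLinearMap₂'_apply'] using B.intervalIntegral_intervalIntegral_apply_apply hf hh

/-- Key algebraic identity for energy preservation: if `M` is symmetric,
`A'(τ,ζ) = φ(τ)ᵀ M φ(ζ)` with `φ(τ) = (1, τ, …, τ^{s-1})ᵀ`, and `S` is
skew-symmetric, then `∫₀¹∫₀¹ A'(τ,ζ) g(τ)ᵀ S g(ζ) dζ dτ = 0`. -/
theorem stmt_4 {s N : ℕ} (M : Matrix (Fin s) (Fin s) ℝ) (hM : M.IsSymm)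
    (S : Matrix (Fin N) (Fin N) ℝ) (hS : Sᵀ = -S)
    (g : ℝ → Fin N → ℝ)
    (hg : IntervalIntegrable g volume 0 1) :
    ∫ τ in (0:ℝ)..1, ∫ ζ in (0:ℝ)..1,
      (∑ i : Fin s, ∑ j : Fin s, τ ^ (i : ℕ) * M i j * ζ ^ (j : ℕ)) *
        dotProduct (g τ) (S.mulVec (g ζ)) = 0 := by
  set Φ : ℝ → Fin s × Fin N → ℝ := fun τ p => τ ^ (p.1 : ℕ) * g τ p.2
  have hΦ : IntervalIntegrable Φ volume 0 1 := intervalIntegrable_pi_iff.mpr fun p =>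
    (intervalIntegrable_pi_iff.mp hg p.2).continuousOn_mul (continuousOn_pow _)
  have hkernel : ∀ τ ζ : ℝ,
      (∑ i : Fin s, ∑ j : Fin s, τ ^ (i : ℕ) * M i j * ζ ^ (j : ℕ)) * g τ ⬝ᵥ S *ᵥ g ζ
        = Φ τ ⬝ᵥ (M ⊗ₖ S) *ᵥ Φ ζ := by
    intro τ ζ
    have hpoly : ∑ i : Fin s, ∑ j : Fin s, τ ^ (i : ℕ) * M i j * ζ ^ (j : ℕ)
        = (fun i : Fin s => τ ^ (i : ℕ)) ⬝ᵥ M *ᵥ fun j => ζ ^ (j : ℕ) := by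
      simp only [dotProduct, mulVec, Finset.mul_sum, mul_assoc]
    rw [hpoly]
    exact (dotProduct_kronecker_mulVec _ _ _ _ _ _).symm
  simp_rw [hkernel]
  rw [intervalIntegral_intervalIntegral_dotProduct_mulVec _ hΦ hΦ]
  exact dotProduct_mulVec_self_eq_zero (kronecker_transpose_eq_neg hM hS) _
end

section
/- Let A(τ,ζ) = (τ, …, τ^s/s) M (1, ζ, …, ζ^{s−1})ᵀ with M ∈ ℝ^{s×s} symmetric, B(ζ) = A(1,ζ), C(τ) = ∫₀¹ A(τ,ζ) dζ, and suppose C(1) = 1. Then for any positive integer k, the condition ∫₀¹ A(τ,ζ) C(ζ)^k dζ = C(τ)^{k+1}/(k+1) for all τ ∈ [0,1] holds if and only if ∫₀¹ B(τ) C(τ)^{k−1} A(τ,ζ) dτ = (B(ζ)/k)(1 − C(ζ)^k) for all ζ ∈ [0,1]. -/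
open MeasureTheory Set Matrix

/-!
Write `φ(ζ) = (ζ^j)_j` and `Φ(τ) = (τ^(i+1)/(i+1))_i`, so that `A(τ, ζ) = Φ(τ) ⬝ M φ(ζ)` and every
integral in the two conditions is bilinear in moment vectors. With `e = ∫₀¹ C^k φ`, the left side
of condition C is `U(τ) = Φ(τ) ⬝ M e`. Symmetry of `M` gives `C' = B`, so integrating by parts
against `(C^k)' = k B C^(k-1)` and using `C(1) = 1` turns the left side of condition D into
`(B(ζ) - U'(ζ)) / k`. Thus C says `U = C^(k+1)/(k+1)` on `[0, 1]` and D says that the derivatives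
`U'` and `B C^k` of these two functions agree there; as both functions vanish at `0`, the two
statements are equivalent.
-/

theorem Matrix.IsSymm.dotProduct_mulVec_comm {n : Type*} [Fintype n] {M : Matrix n n ℝ}
    (hM : M.IsSymm) (v w : n → ℝ) : v ⬝ᵥ M *ᵥ w = w ⬝ᵥ M *ᵥ v := by
  rw [dotProduct_mulVec, dotProduct_comm, ← vecMul_transpose, hM.eq]

theorem intervalIntegral.integral_dotProduct {ι : Type*} [Fintype ι] {a b : ℝ} {μ : Measure ℝ}
    (v : ι → ℝ) {g : ℝ → ι → ℝ} (hg : ∀ i, IntervalIntegrable (fun x => g x i) μ a b) :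
    ∫ x in a..b, v ⬝ᵥ g x ∂μ = v ⬝ᵥ fun i => ∫ x in a..b, g x i ∂μ := by
  simp only [dotProduct]
  rw [intervalIntegral.integral_finsetSum fun i _ => (hg i).const_mul (v i)]
  simp only [intervalIntegral.integral_const_mul]

theorem eqOn_Icc_iff_of_hasDerivAt {F G f g : ℝ → ℝ} {a b : ℝ} (hab : a < b)
    (hF : ∀ x ∈ Icc a b, HasDerivAt F (f x) x) (hG : ∀ x ∈ Icc a b, HasDerivAt G (g x) x)
    (hf : ContinuousOn f (Icc a b)) (hg : ContinuousOn g (Icc a b)) (ha : F a = G a) :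
    EqOn F G (Icc a b) ↔ EqOn f g (Icc a b) := by
  constructor
  · intro h
    have hIoo : EqOn f g (Ioo a b) := fun x hx =>
      have hFG : F =ᶠ[nhds x] G :=
        Filter.eventually_of_mem (isOpen_Ioo.mem_nhds hx) fun y hy => h (Ioo_subset_Icc_self hy)
      (hF x (Ioo_subset_Icc_self hx)).unique
        ((hG x (Ioo_subset_Icc_self hx)).congr_of_eventuallyEq hFG)
    exact hIoo.of_subset_closure hf hg Ioo_subset_Icc_self (closure_Ioo hab.ne).ge
  · intro h
    exact eq_of_has_deriv_right_eq (fun x hx => (hF x (Ico_subset_Icc_self hx)).hasDerivWithinAt)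
      (fun x hx => h (Ico_subset_Icc_self hx) ▸ (hG x (Ico_subset_Icc_self hx)).hasDerivWithinAt)
      (fun x hx => (hF x hx).continuousAt.continuousWithinAt)
      (fun x hx => (hG x hx).continuousAt.continuousWithinAt) ha

theorem HasDerivAt.pow_succ_div_succ {C : ℝ → ℝ} {b x : ℝ} (hC : HasDerivAt C b x) (k : ℕ) :
    HasDerivAt (fun y => C y ^ (k + 1) / (k + 1)) (b * C x ^ k) x := by
  refine ((hC.pow (k + 1)).div_const ((k : ℝ) + 1)).congr_deriv ?_
  rw [Nat.add_sub_cancel]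
  push_cast
  field_simp

noncomputable section

def monomials (s : ℕ) (x : ℝ) : Fin s → ℝ := fun j => x ^ (j : ℕ)

def primitiveMonomials (s : ℕ) (x : ℝ) : Fin s → ℝ := fun i => x ^ ((i : ℕ) + 1) / ((i : ℕ) + 1)

def moments (s : ℕ) (f : ℝ → ℝ) : Fin s → ℝ := fun j => ∫ x in (0 : ℝ)..1, f x * x ^ (j : ℕ)

section Monomials

variable {s : ℕ}

theorem continuous_monomials_dotProduct (v : Fin s → ℝ) :
    Continuous fun x => monomials s x ⬝ᵥ v :=
  (continuous_pi fun j : Fin s => continuous_pow (j : ℕ)).dotProduct continuous_const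

theorem hasDerivAt_primitiveMonomials (i : Fin s) (x : ℝ) :
    HasDerivAt (fun y => primitiveMonomials s y i) (monomials s x i) x := by
  refine ((hasDerivAt_pow ((i : ℕ) + 1) x).div_const _).congr_deriv ?_
  simp only [monomials, Nat.add_sub_cancel]
  push_cast
  field_simp

theorem hasDerivAt_primitiveMonomials_dotProduct (v : Fin s → ℝ) (x : ℝ) :
    HasDerivAt (fun y => primitiveMonomials s y ⬝ᵥ v) (monomials s x ⬝ᵥ v) x :=
  HasDerivAt.fun_sum fun i _ => (hasDerivAt_primitiveMonomials i x).mul_const (v i)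

@[simp]
theorem primitiveMonomials_zero : primitiveMonomials s 0 = 0 := by
  ext i
  simp [primitiveMonomials]

theorem integral_monomials (b : ℝ) :
    (fun j => ∫ x in (0 : ℝ)..b, monomials s x j) = primitiveMonomials s b := by
  ext j
  simp [monomials, primitiveMonomials, integral_pow]

theorem smul_integral_deriv_mul_pow_mul_primitiveMonomials {B C : ℝ → ℝ}
    (hC : ∀ x, HasDerivAt C (B x) x) (hB : Continuous B) (h1 : C 1 = 1) (k : ℕ) :
    (k : ℝ) • (fun i => ∫ x in (0 : ℝ)..1, B x * C x ^ (k - 1) * primitiveMonomials s x i) =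
      primitiveMonomials s 1 - moments s (fun x => C x ^ k) := by
  ext i
  have hCc : Continuous C := continuous_iff_continuousAt.2 fun x => (hC x).continuousAt
  have := intervalIntegral.integral_mul_deriv_eq_deriv_mul (a := 0) (b := 1)
    (fun x _ => hasDerivAt_primitiveMonomials i x) (fun x _ => (hC x).pow k)
    ((continuous_pow _).intervalIntegrable _ _)
    ((continuous_const.mul (hCc.pow _)).mul hB |>.intervalIntegrable _ _)
  simp only [Pi.pow_apply, h1, one_pow, mul_one, primitiveMonomials_zero, Pi.zero_apply, zero_mul,
    sub_zero, monomials] at this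
  rw [Pi.smul_apply, smul_eq_mul, ← intervalIntegral.integral_const_mul, Pi.sub_apply, moments]
  simp only [mul_comm (C _ ^ k)]
  convert this using 2
  ext x
  ring

end Monomials

def csrkKernel {s : ℕ} (M : Matrix (Fin s) (Fin s) ℝ) (τ ζ : ℝ) : ℝ :=
  primitiveMonomials s τ ⬝ᵥ M *ᵥ monomials s ζ

section Kernel

variable {s : ℕ} (M : Matrix (Fin s) (Fin s) ℝ)

theorem integral_csrkKernel (τ : ℝ) :
    ∫ ζ in (0 : ℝ)..1, csrkKernel M τ ζ =
      primitiveMonomials s τ ⬝ᵥ M *ᵥ primitiveMonomials s 1 := by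
  simp only [csrkKernel, dotProduct_mulVec]
  rw [intervalIntegral.integral_dotProduct (g := monomials s) _
      fun j => (continuous_pow _).intervalIntegrable _ _,
    integral_monomials]

theorem integral_csrkKernel_mul {f : ℝ → ℝ} (hf : Continuous f) (τ : ℝ) :
    ∫ ζ in (0 : ℝ)..1, csrkKernel M τ ζ * f ζ = primitiveMonomials s τ ⬝ᵥ M *ᵥ moments s f := by
  have h (ζ : ℝ) :
      csrkKernel M τ ζ * f ζ = (primitiveMonomials s τ ᵥ* M) ⬝ᵥ (f ζ • monomials s ζ) := by
    rw [dotProduct_smul, csrkKernel, dotProduct_mulVec, smul_eq_mul, mul_comm]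
  simp only [h]
  rw [intervalIntegral.integral_dotProduct (g := fun ζ => f ζ • monomials s ζ) _
      fun j => (hf.mul (continuous_pow _)).intervalIntegrable _ _,
    dotProduct_mulVec]
  rfl

theorem integral_mul_csrkKernel {f : ℝ → ℝ} (hf : Continuous f) (ζ : ℝ) :
    ∫ τ in (0 : ℝ)..1, f τ * csrkKernel M τ ζ =
      (fun i => ∫ τ in (0 : ℝ)..1, f τ * primitiveMonomials s τ i) ⬝ᵥ M *ᵥ monomials s ζ := by
  have h (τ : ℝ) :
      f τ * csrkKernel M τ ζ = (M *ᵥ monomials s ζ) ⬝ᵥ (f τ • primitiveMonomials s τ) := by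
    rw [dotProduct_smul, csrkKernel, dotProduct_comm, smul_eq_mul]
  simp only [h]
  rw [intervalIntegral.integral_dotProduct (g := fun τ => f τ • primitiveMonomials s τ) _
      fun i => (hf.mul ((continuous_pow _).div_const _)).intervalIntegrable _ _,
    dotProduct_comm]
  rfl

variable {M}

theorem hasDerivAt_integral_csrkKernel (hM : M.IsSymm) (τ : ℝ) :
    HasDerivAt (fun τ => ∫ ζ in (0 : ℝ)..1, csrkKernel M τ ζ) (csrkKernel M 1 τ) τ := by
  simp only [integral_csrkKernel]
  rw [csrkKernel, hM.dotProduct_mulVec_comm]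
  exact hasDerivAt_primitiveMonomials_dotProduct _ τ

theorem natCast_mul_integral_deriv_mul_pow_pred_mul_csrkKernel {B C : ℝ → ℝ}
    (hC : ∀ x, HasDerivAt C (B x) x) (hB : Continuous B) (h1 : C 1 = 1) (k : ℕ) (ζ : ℝ) :
    k * ∫ τ in (0 : ℝ)..1, B τ * C τ ^ (k - 1) * csrkKernel M τ ζ =
      csrkKernel M 1 ζ - moments s (fun x => C x ^ k) ⬝ᵥ M *ᵥ monomials s ζ := by
  have hCc : Continuous C := continuous_iff_continuousAt.2 fun x => (hC x).continuousAt
  rw [integral_mul_csrkKernel M (f := fun τ => B τ * C τ ^ (k - 1)) (hB.mul (hCc.pow _)),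
    ← smul_eq_mul, ← smul_dotProduct, smul_integral_deriv_mul_pow_mul_primitiveMonomials hC hB h1,
    sub_dotProduct]
  rfl

end Kernel

end

/-- For a consistent CSRK method with symmetric `M`, the `k`-th simplifying assumption
`C` is equivalent to the `k`-th simplifying assumption `D`. -/
theorem stmt_7 {s : ℕ} (M : Matrix (Fin s) (Fin s) ℝ) (hM : M.IsSymm)
    (A : ℝ → ℝ → ℝ)
    (hA : ∀ τ ζ : ℝ, A τ ζ =
      ∑ i : Fin s, ∑ j : Fin s, (τ ^ ((i : ℕ) + 1) / ((i : ℕ) + 1)) * M i j * ζ ^ (j : ℕ))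
    (B C : ℝ → ℝ)
    (hB : ∀ ζ, B ζ = A 1 ζ)
    (hC : ∀ τ, C τ = ∫ ζ in (0:ℝ)..1, A τ ζ)
    (hcons : C 1 = 1)
    (k : ℕ) (hk : 0 < k) :
    (∀ τ ∈ Icc (0:ℝ) 1, ∫ ζ in (0:ℝ)..1, A τ ζ * C ζ ^ k = C τ ^ (k + 1) / (k + 1)) ↔
    (∀ ζ ∈ Icc (0:ℝ) 1, ∫ τ in (0:ℝ)..1, B τ * C τ ^ (k - 1) * A τ ζ
      = B ζ / k * (1 - C ζ ^ k)) := by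
  have hk0 : (k : ℝ) ≠ 0 := by positivity
  obtain rfl : A = csrkKernel M := by
    ext τ ζ
    simp only [hA, csrkKernel, dotProduct, mulVec, primitiveMonomials, monomials, Finset.mul_sum,
      mul_assoc]
  have hBw : B = fun ζ => monomials s ζ ⬝ᵥ M *ᵥ primitiveMonomials s 1 :=
    funext fun ζ => (hB ζ).trans (hM.dotProduct_mulVec_comm _ _)
  have hCd : ∀ τ, HasDerivAt C (B τ) τ := fun τ => by
    simpa only [← hC, ← hB] using hasDerivAt_integral_csrkKernel hM τ
  have hBc : Continuous B := hBw ▸ continuous_monomials_dotProduct _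
  have hCc : Continuous C := continuous_iff_continuousAt.2 fun τ => (hCd τ).continuousAt
  set e := moments s fun ζ => C ζ ^ k
  have hCint (τ : ℝ) : ∫ ζ in (0:ℝ)..1, csrkKernel M τ ζ * C ζ ^ k =
      primitiveMonomials s τ ⬝ᵥ M *ᵥ e :=
    integral_csrkKernel_mul M (hCc.pow k) τ
  have hDint (ζ : ℝ) : ∫ τ in (0:ℝ)..1, B τ * C τ ^ (k - 1) * csrkKernel M τ ζ =
      (B ζ - monomials s ζ ⬝ᵥ M *ᵥ e) / k := by
    rw [eq_div_iff hk0, mul_comm,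
      natCast_mul_integral_deriv_mul_pow_pred_mul_csrkKernel hCd hBc hcons, ← hB,
      hM.dotProduct_mulVec_comm e]
  have hEqOn := eqOn_Icc_iff_of_hasDerivAt zero_lt_one
    (fun τ _ => hasDerivAt_primitiveMonomials_dotProduct (M *ᵥ e) τ)
    (fun τ _ => (hCd τ).pow_succ_div_succ k)
    (continuous_monomials_dotProduct _).continuousOn (hBc.mul (hCc.pow k)).continuousOn
    (by simp [hC, integral_csrkKernel])
  simp only [hCint, hDint]
  refine hEqOn.trans (forall₂_congr fun ζ _ => ?_)
  field_simp
  constructor <;> intro h <;> linarith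
end

section
/- Let C : [0,1] → ℝ be a polynomial with C(0) = 0 that is strictly monotonic on [0,1]. Then the s×∞ matrix Φ with entries Φ_{i,j} = ∫₀¹ τ^{i−1} C(τ)^j dτ (1 ≤ i ≤ s, j ≥ 1) has rank s; equivalently, if a polynomial p of degree ≤ s−1 satisfies ∫₀¹ p(τ) C(τ)^j dτ = 0 for all j ≥ 1, then p = 0. -/
/-!
With `q = p * C`, the hypotheses say that `q` is orthogonal in `L²[0,1]` to `G ∘ C` for every
polynomial `G`. As `C` is injective on `[0,1]`, Stone–Weierstrass makes the functions `G ∘ C`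
dense in `C([0,1], ℝ)`, and the pairing with `q` is continuous for the sup norm, so `q` is
orthogonal to itself. Hence `q` vanishes on `[0,1]`, so `q = 0`, and `p = 0` since `C ≠ 0`.
-/

open MeasureTheory Set Polynomial
open scoped unitInterval

theorem intervalIntegral.integral_mul_eval_comp_eq_zero {f c : ℝ → ℝ} {a b : ℝ}
    (hf : Continuous f) (hc : Continuous c)
    (h : ∀ j : ℕ, ∫ x in a..b, f x * c x ^ j = 0) (G : ℝ[X]) :
    ∫ x in a..b, f x * G.eval (c x) = 0 := by
  induction G using Polynomial.induction_on' with
  | add G H hG hH =>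
    simp only [eval_add, mul_add]
    rw [intervalIntegral.integral_add (Continuous.intervalIntegrable (by fun_prop) _ _)
      (Continuous.intervalIntegrable (by fun_prop) _ _), hG, hH, add_zero]
  | monomial n r =>
    simp only [eval_monomial, mul_left_comm (f _)]
    rw [intervalIntegral.integral_const_mul, h n, mul_zero]

theorem unitInterval.integral_eq_intervalIntegral (f : ℝ → ℝ) :
    ∫ x : I, f x = ∫ x in (0:ℝ)..1, f x := by
  rw [volume_def, integral_subtype_comap measurableSet_Icc,
    intervalIntegral.integral_of_le zero_le_one, integral_Icc_eq_integral_Ioc]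

namespace ContinuousMap

variable {X : Type*} [TopologicalSpace X] [CompactSpace X] [MeasurableSpace X] [BorelSpace X]
  (μ : Measure X) [IsFiniteMeasure μ]

theorem continuous_integral_mul_left (f : C(X, ℝ)) :
    Continuous fun g : C(X, ℝ) => ∫ x, f x * g x ∂μ := by
  have key (g : C(X, ℝ)) : ∫ x, f x * g x ∂μ =
      inner ℝ (toLp 2 μ ℝ f) (toLp 2 μ ℝ g) := by
    simp [MeasureTheory.ContinuousMap.inner_toLp, mul_comm]
  simp_rw [key]
  exact continuous_const.inner (toLp 2 μ ℝ).continuous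

theorem integral_mul_eq_zero_of_separatesPoints {A : Subalgebra ℝ C(X, ℝ)}
    (hA : A.SeparatesPoints) {f : C(X, ℝ)} (hf : ∀ g ∈ A, ∫ x, f x * g x ∂μ = 0)
    (g : C(X, ℝ)) : ∫ x, f x * g x ∂μ = 0 := by
  have hg : g ∈ closure (A : Set C(X, ℝ)) := by
    rw [← Subalgebra.topologicalClosure_coe,
      subalgebra_topologicalClosure_eq_top_of_separatesPoints A hA]
    trivial
  exact closure_minimal hf (isClosed_eq (continuous_integral_mul_left μ f) continuous_const) hg

theorem integral_mul_eq_zero_of_injective {c : C(X, ℝ)} (hc : Function.Injective c)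
    {f : C(X, ℝ)} (hf : ∀ G : ℝ[X], ∫ x, f x * G.eval (c x) ∂μ = 0)
    (g : C(X, ℝ)) : ∫ x, f x * g x ∂μ = 0 := by
  refine integral_mul_eq_zero_of_separatesPoints μ (A := (aeval c).range) ?_ ?_ g
  · rintro x y hxy
    exact ⟨c, ⟨c, ⟨Polynomial.X, aeval_X c⟩, rfl⟩, hc.ne hxy⟩
  · rintro _ ⟨G, rfl⟩
    simpa [aeval_continuousMap_apply] using hf G

end ContinuousMap

theorem Polynomial.eq_zero_of_intervalIntegral_sq_eq_zero {q : ℝ[X]} {a b : ℝ} (hab : a < b)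
    (h : ∫ x in a..b, q.eval x ^ 2 = 0) : q = 0 := by
  have hae : (fun x => q.eval x ^ 2) =ᵐ[volume.restrict (Ioc a b)] 0 :=
    (intervalIntegral.integral_eq_zero_iff_of_le_of_nonneg_ae hab.le
      (ae_of_all _ fun x => sq_nonneg _) (Continuous.intervalIntegrable (by fun_prop) _ _)).mp h
  have hzero := Measure.eqOn_Ioc_of_ae_eq volume hae (by fun_prop) continuousOn_const
  refine eq_zero_of_infinite_isRoot q ((Ioc_infinite hab).mono fun x hx => ?_)
  simpa using hzero hx

theorem stmt_9_general (C : Polynomial ℝ)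
    (hmono : StrictMonoOn (fun τ => C.eval τ) (Icc (0:ℝ) 1) ∨
             StrictAntiOn (fun τ => C.eval τ) (Icc (0:ℝ) 1))
    (p : Polynomial ℝ)
    (hint : ∀ j : ℕ, 1 ≤ j → ∫ τ in (0:ℝ)..1, p.eval τ * (C.eval τ) ^ j = 0) :
    p = 0 := by
  have hinj : InjOn C.eval I := hmono.elim StrictMonoOn.injOn StrictAntiOn.injOn
  have hC : C ≠ 0 := by
    rintro rfl
    simpa using hinj (left_mem_Icc.2 zero_le_one) (right_mem_Icc.2 zero_le_one) (by simp)
  have hmoments (G : ℝ[X]) : ∫ τ in (0:ℝ)..1, (p * C).eval τ * G.eval (C.eval τ) = 0 := by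
    refine intervalIntegral.integral_mul_eval_comp_eq_zero (by fun_prop) (by fun_prop)
      (fun j => ?_) G
    simpa [pow_succ', mul_assoc] using hint (j + 1) le_add_self
  have horth := ContinuousMap.integral_mul_eq_zero_of_injective volume
    (c := C.toContinuousMapOn I) hinj.injective (f := (p * C).toContinuousMapOn I)
    (fun G => (unitInterval.integral_eq_intervalIntegral _).trans (hmoments G))
    ((p * C).toContinuousMapOn I)
  have hsq : ∫ τ in (0:ℝ)..1, (p * C).eval τ ^ 2 = 0 := by
    simpa only [sq] using (unitInterval.integral_eq_intervalIntegral _).symm.trans horth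
  exact (mul_eq_zero.mp (eq_zero_of_intervalIntegral_sq_eq_zero zero_lt_one hsq)).resolve_right hC

/-- Full-rank property of the moment matrix for strictly monotonic `C`: if a
polynomial `p` of degree `≤ s - 1` satisfies `∫₀¹ p(τ) C(τ)^j dτ = 0` for all
`j ≥ 1`, where `C` is a polynomial with `C(0) = 0` strictly monotonic on `[0,1]`,
then `p = 0`. -/
theorem stmt_9 (s : ℕ) (C : Polynomial ℝ) (hC0 : C.eval 0 = 0)
    (hmono : StrictMonoOn (fun τ => C.eval τ) (Icc (0:ℝ) 1) ∨
             StrictAntiOn (fun τ => C.eval τ) (Icc (0:ℝ) 1))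
    (p : Polynomial ℝ) (hdeg : p.natDegree ≤ s - 1)
    (hint : ∀ j : ℕ, 1 ≤ j → ∫ τ in (0:ℝ)..1, p.eval τ * (C.eval τ) ^ j = 0) :
    p = 0 :=
  stmt_9_general C hmono p hint
end

section
/- Let c₁, …, c_s ∈ ℝ be distinct and nonzero, V the s×s Vandermonde-type matrix V_{ik} = c_i^k, and A(τ,ζ) = Σ_{i=1}^s τ^i P_i(ζ) with each P_i a polynomial of degree ≤ s−1. Define l_j(ζ) = Π_{k=0, k≠j}^{s} (ζ − c_k)/(c_j − c_k) with c₀ = 0, and E_{ij} = ∫₀¹ A(c_i, ζ) l_j(ζ) dζ. Then (V^{−1} E V)_{ij} = ∫₀¹ P_i(ζ) ζ^j dζ; in particular the eigenvalues of E do not depend on the choice of c₁, …, c_s. -/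
open MeasureTheory Matrix

/-- The similarity transform `V⁻¹ E V` of the matrix `E` appearing in the simplified
Newton iteration for CSRK methods has entries `∫₀¹ P_i(ζ) ζ^j dζ`; in particular the
eigenvalues of `E` do not depend on the nodes `c₁, …, c_s`. -/
theorem stmt_14 {s : ℕ} (c : Fin s → ℝ)
    (hinj : Function.Injective c) (hne : ∀ i, c i ≠ 0)
    (V : Matrix (Fin s) (Fin s) ℝ) (hV : ∀ i k : Fin s, V i k = c i ^ ((k : ℕ) + 1))
    (P : Fin s → Polynomial ℝ) (hP : ∀ i, (P i).natDegree ≤ s - 1)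
    (A : ℝ → ℝ → ℝ)
    (hA : ∀ τ ζ : ℝ, A τ ζ = ∑ i : Fin s, τ ^ ((i : ℕ) + 1) * (P i).eval ζ)
    (c' : Fin (s + 1) → ℝ) (hc' : c' = Fin.cons 0 c)
    (l : Fin (s + 1) → ℝ → ℝ)
    (hl : ∀ j ζ, l j ζ = ∏ k ∈ Finset.univ.erase j, (ζ - c' k) / (c' j - c' k))
    (E : Matrix (Fin s) (Fin s) ℝ)
    (hE : ∀ i j : Fin s, E i j = ∫ ζ in (0:ℝ)..1, A (c i) ζ * l j.succ ζ) :
    ∀ i j : Fin s,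
      (V⁻¹ * E * V) i j = ∫ ζ in (0:ℝ)..1, (P i).eval ζ * ζ ^ ((j : ℕ) + 1) := by
  -- injectivity of c'
  have hc'inj : Function.Injective c' := by
    rw [hc']
    refine Fin.cons_injective_of_injective ?_ hinj
    rintro ⟨i, hi⟩
    exact hne i hi
  -- continuity facts
  have hlc : ∀ j, Continuous (l j) := by
    intro j
    have : (l j) = fun ζ => ∏ k ∈ Finset.univ.erase j, (ζ - c' k) / (c' j - c' k) := by
      funext ζ; exact hl j ζ
    rw [this]
    exact continuous_finset_prod _ fun k _ =>
      ((continuous_id.sub continuous_const).div_const _)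
  have hAc : ∀ τ, Continuous (A τ) := by
    intro τ
    have : (A τ) = fun ζ => ∑ i : Fin s, τ ^ ((i : ℕ) + 1) * (P i).eval ζ := by
      funext ζ; exact hA τ ζ
    rw [this]
    exact continuous_finset_sum _ fun i _ => continuous_const.mul (P i).continuous
  -- l is the evaluation of the Lagrange basis polynomials
  have hlb : ∀ (j : Fin (s+1)) (ζ : ℝ),
      (Lagrange.basis Finset.univ c' j).eval ζ = l j ζ := by
    intro j ζ
    rw [hl, Lagrange.basis, Polynomial.eval_prod]
    refine Finset.prod_congr rfl fun k _ => ?_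
    simp [Lagrange.basisDivisor, div_eq_mul_inv, mul_comm]
  -- key Lagrange identity
  have key : ∀ (j : Fin s) (ζ : ℝ),
      (∑ k : Fin s, c k ^ ((j : ℕ) + 1) * l k.succ ζ) = ζ ^ ((j : ℕ) + 1) := by
    intro j ζ
    have hdeg : ((Polynomial.X : Polynomial ℝ) ^ ((j : ℕ) + 1)).degree <
        (Finset.univ : Finset (Fin (s+1))).card := by
      rw [Polynomial.degree_X_pow, Finset.card_univ, Fintype.card_fin]
      exact_mod_cast Nat.succ_lt_succ j.isLt
    have hint := Lagrange.eq_interpolate (f := (Polynomial.X : Polynomial ℝ) ^ ((j : ℕ) + 1))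
      (hc'inj.injOn) hdeg
    have := congrArg (Polynomial.eval ζ) hint
    rw [Lagrange.interpolate_apply, Polynomial.eval_finset_sum] at this
    simp only [Polynomial.eval_mul, Polynomial.eval_C, Polynomial.eval_pow,
      Polynomial.eval_X] at this
    rw [Fin.sum_univ_succ] at this
    have h0 : c' 0 = 0 := by rw [hc']; rfl
    rw [h0, zero_pow (Nat.succ_ne_zero _), zero_mul, zero_add] at this
    calc (∑ k : Fin s, c k ^ ((j : ℕ) + 1) * l k.succ ζ)
        = ∑ k : Fin s, c' k.succ ^ ((j : ℕ) + 1) *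
            (Lagrange.basis Finset.univ c' k.succ).eval ζ := by
          refine Finset.sum_congr rfl fun k _ => ?_
          rw [hlb, hc']
          rfl
      _ = ζ ^ ((j : ℕ) + 1) := this.symm
  -- target matrix
  set M : Matrix (Fin s) (Fin s) ℝ :=
    Matrix.of fun i j => ∫ ζ in (0:ℝ)..1, (P i).eval ζ * ζ ^ ((j : ℕ) + 1) with hM
  -- E * V = V * M
  have hEV : E * V = V * M := by
    ext i j
    rw [Matrix.mul_apply, Matrix.mul_apply]
    calc ∑ k : Fin s, E i k * V k j
        = ∑ k : Fin s, ∫ ζ in (0:ℝ)..1,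
            A (c i) ζ * l k.succ ζ * c k ^ ((j : ℕ) + 1) := by
          refine Finset.sum_congr rfl fun k _ => ?_
          rw [hE, hV, intervalIntegral.integral_mul_const]
      _ = ∫ ζ in (0:ℝ)..1, ∑ k : Fin s,
            A (c i) ζ * l k.succ ζ * c k ^ ((j : ℕ) + 1) := by
          rw [intervalIntegral.integral_finset_sum]
          intro k _
          exact (((hAc (c i)).mul (hlc k.succ)).mul continuous_const).intervalIntegrable _ _
      _ = ∫ ζ in (0:ℝ)..1, A (c i) ζ * ζ ^ ((j : ℕ) + 1) := by
          refine intervalIntegral.integral_congr fun ζ _ => ?_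
          rw [← key j ζ, Finset.mul_sum]
          refine Finset.sum_congr rfl fun k _ => ?_
          ring
      _ = ∫ ζ in (0:ℝ)..1, ∑ m : Fin s,
            c i ^ ((m : ℕ) + 1) * ((P m).eval ζ * ζ ^ ((j : ℕ) + 1)) := by
          refine intervalIntegral.integral_congr fun ζ _ => ?_
          rw [hA, Finset.sum_mul]
          refine Finset.sum_congr rfl fun m _ => ?_
          ring
      _ = ∑ m : Fin s, V i m * M m j := by
          rw [intervalIntegral.integral_finset_sum]
          · refine Finset.sum_congr rfl fun m _ => ?_
            rw [hV, hM, intervalIntegral.integral_const_mul]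
            rfl
          · intro m _
            exact (continuous_const.mul ((P m).continuous.mul
              (continuous_pow _))).intervalIntegrable _ _
  -- V is invertible
  have hVdet : IsUnit V.det := by
    have hVeq : V = Matrix.diagonal c * Matrix.vandermonde c := by
      ext i k
      rw [Matrix.mul_apply, hV]
      simp [Matrix.diagonal, Matrix.vandermonde, pow_succ, mul_comm]
    rw [hVeq, Matrix.det_mul, Matrix.det_diagonal, isUnit_iff_ne_zero]
    exact mul_ne_zero (Finset.prod_ne_zero_iff.mpr fun i _ => hne i)
      (Matrix.det_vandermonde_ne_zero_iff.mpr hinj)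
  intro i j
  have : V⁻¹ * E * V = M := by
    rw [mul_assoc, hEV, ← mul_assoc, Matrix.nonsing_inv_mul V hVdet, one_mul]
  rw [this]
  rfl
end

section
/- For M = [[α₁+4, −6α₁−6, 6α₁], [−6α₁−6, 36α₁+12, −36α₁], [6α₁, −36α₁, 36α₁]], the matrix N = diag(1, 1/2, 1/3) · M · [[1/2,1/3,1/4],[1/3,1/4,1/5],[1/4,1/5,1/6]] has characteristic polynomial λ³ − (1/2)λ² + (1/12 + α₁/300)λ − α₁/600. -/
open Matrix Polynomial

set_option maxHeartbeats 1000000 in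
/-- The characteristic polynomial of `N = diag(1,1/2,1/3) · M · [[1/2,…],[…],[…]]`
for the three-degree fourth-order family is
`λ³ - (1/2)λ² + (1/12 + α₁/300)λ - α₁/600`. -/
theorem stmt_17 (α₁ : ℝ)
    (M : Matrix (Fin 3) (Fin 3) ℝ)
    (hM : M = Matrix.of
      ![![α₁ + 4, -6 * α₁ - 6, 6 * α₁],
        ![-6 * α₁ - 6, 36 * α₁ + 12, -36 * α₁],
        ![6 * α₁, -36 * α₁, 36 * α₁]])
    (N : Matrix (Fin 3) (Fin 3) ℝ)
    (hN : N = (Matrix.diagonal ![(1:ℝ), 1/2, 1/3]) * M *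
      Matrix.of ![![(1:ℝ)/2, 1/3, 1/4], ![1/3, 1/4, 1/5], ![1/4, 1/5, 1/6]]) :
    N.charpoly = X ^ 3 - Polynomial.C (1/2 : ℝ) * X ^ 2
      + Polynomial.C (1/12 + α₁/300) * X - Polynomial.C (α₁/600) := by
  have hN' : N = Matrix.of
      ![![(0:ℝ), -1/6 + α₁/30, -1/5 + α₁/20],
        ![1/2, 1/2 - α₁/10, 9/20 - 3*α₁/20],
        ![0, α₁/15, α₁/10]] := by
    subst hM hN
    ext i j
    fin_cases i <;> fin_cases j <;>
      simp [Matrix.mul_apply, Fin.sum_univ_three, Matrix.diagonal] <;> ring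
  rw [hN', Matrix.charpoly, Matrix.det_fin_three]
  simp only [Matrix.charmatrix_apply, Matrix.of_apply, Matrix.cons_val_zero,
    Matrix.cons_val_one, Matrix.head_cons, Matrix.one_apply_eq, Matrix.one_apply_ne,
    Matrix.cons_val', Matrix.empty_val', Matrix.cons_val_fin_one, Fin.mk_zero, Fin.mk_one,
    Matrix.head_fin_const, Matrix.tail_cons, Matrix.cons_val_two, Matrix.diagonal]
  norm_num [Fin.ext_iff]
  apply Polynomial.funext
  intro x
  simp only [eval_add, eval_sub, eval_mul, eval_pow, eval_neg, eval_C, eval_X]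
  ring
end

section
/- The cubic λ³ − (1/2)λ² + (1/12 + α₁/300)λ − α₁/600 has three distinct real roots whenever −α₁/300 > (1/6)·2^{2/3} + (5/24)·2^{1/3} + 1/4. -/
set_option maxHeartbeats 1000000 in
/-- The cubic `λ³ - (1/2)λ² + (1/12 + α₁/300)λ - α₁/600` has three distinct real
roots whenever `-α₁/300 > (1/6)·2^{2/3} + (5/24)·2^{1/3} + 1/4`. -/
theorem stmt_18 (α₁ : ℝ)
    (hθ : -α₁ / 300 > (1/6) * (2:ℝ) ^ ((2:ℝ)/3) + (5/24) * (2:ℝ) ^ ((1:ℝ)/3) + 1/4) :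
    ∃ x y z : ℝ, x ≠ y ∧ x ≠ z ∧ y ≠ z ∧
      (∀ t ∈ ({x, y, z} : Set ℝ),
        t ^ 3 - (1/2) * t ^ 2 + (1/12 + α₁/300) * t - α₁/600 = 0) := by
  set F : ℝ → ℝ := fun t => t ^ 3 - (1/2) * t ^ 2 + (1/12 + α₁/300) * t - α₁/600 with hF
  have hc0 : (0:ℝ) < (2:ℝ) ^ ((1:ℝ)/3) := Real.rpow_pos_of_pos (by norm_num) _
  set c : ℝ := (2:ℝ) ^ ((1:ℝ)/3) with hcdef
  have hc3 : c ^ 3 = 2 := by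
    rw [hcdef, ← Real.rpow_natCast ((2:ℝ) ^ ((1:ℝ)/3)) 3, ← Real.rpow_mul (by norm_num)]
    norm_num
  have hc2 : (2:ℝ) ^ ((2:ℝ)/3) = c ^ 2 := by
    rw [hcdef, ← Real.rpow_natCast ((2:ℝ) ^ ((1:ℝ)/3)) 2, ← Real.rpow_mul (by norm_num)]
    norm_num
  have hc54 : c > 5/4 := by nlinarith [hc3, hc0, sq_nonneg (c - 5/4), sq_nonneg (c + 5/4)]
  set θ : ℝ := -α₁ / 300 with hθdef
  have hθ0 : θ > (1/6) * c ^ 2 + (5/24) * c + 1/4 := by rw [← hc2]; exact hθ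
  have hθpos : (0:ℝ) < θ := by nlinarith
  set u : ℝ := Real.sqrt (12 * θ) with hudef
  have hu2 : u ^ 2 = 12 * θ := Real.sq_sqrt (by linarith)
  have hupos : 0 < u := Real.sqrt_pos.mpr (by linarith)
  set u₀ : ℝ := 1 + c + c ^ 2 / 2 with hu0def
  have hu0sq : u₀ ^ 2 = 3 + (5/2) * c + 2 * c ^ 2 := by
    rw [hu0def]; linear_combination (1 + c/4) * hc3
  have hu0pos : 0 < u₀ := by rw [hu0def]; positivity
  have huu0 : u > u₀ := by
    have h1 : u₀ ^ 2 < u ^ 2 := by rw [hu2, hu0sq]; linarith [hθ0]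
    exact lt_of_pow_lt_pow_left₀ 2 hupos.le h1
  have hg0 : 2 * u₀ ^ 3 - 6 * u₀ ^ 2 - 1 = 0 := by
    rw [hu0def]; linear_combination (5/2 + 3*c + (3/2)*c^2 + (1/4)*c^3) * hc3
  have hu03 : u₀ > 3 := by rw [hu0def]; nlinarith [hc54]
  have hu3 : u > 3 := lt_trans hu03 huu0
  have hg : 2 * u ^ 3 - 6 * u ^ 2 - 1 > 0 := by
    nlinarith [hg0, mul_pos (sub_pos.mpr huu0)
      (show (0:ℝ) < 2*u*(u-3) + 2*u₀*(u₀-3) + 2*u*u₀ from by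
        nlinarith [hu3, hu03, mul_pos hupos hu0pos])]
  -- rewrite F in terms of θ
  have hFθ : ∀ t, F t = t ^ 3 - (1/2) * t ^ 2 + (1/12 - θ) * t + θ/2 := by
    intro t; rw [hF, hθdef]; ring
  -- sign values
  have hA : F (-(θ+1)) < 0 := by rw [hFθ]; nlinarith [hθpos]
  have hB : F (1/2) > 0 := by rw [hFθ]; ring_nf; norm_num
  have hC : F ((1+u)/6) < 0 := by
    rw [hFθ]
    have : ((1+u)/6) ^ 3 - (1/2) * ((1+u)/6) ^ 2 + (1/12 - θ) * ((1+u)/6) + θ/2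
        = (1 + 6 * u ^ 2 - 2 * u ^ 3) / 216 := by
      have h12 : θ = u ^ 2 / 12 := by linarith [hu2]
      rw [h12]; ring
    rw [this]; nlinarith [hg]
  have hD : F (u+1) > 0 := by
    rw [hFθ]
    have h12 : θ = u ^ 2 / 12 := by linarith [hu2]
    rw [h12]; nlinarith [hu3]
  have hcont : ∀ s : Set ℝ, ContinuousOn F s := fun s => (by fun_prop : Continuous F).continuousOn
  have hab : -(θ+1) ≤ (1/2 : ℝ) := by linarith
  have hbc : (1/2 : ℝ) ≤ (1+u)/6 := by linarith
  have hcd : (1+u)/6 ≤ u + 1 := by linarith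
  obtain ⟨x, hx, hxr⟩ := intermediate_value_Ioo hab (hcont _)
    (show (0:ℝ) ∈ Set.Ioo (F (-(θ+1))) (F (1/2)) from ⟨hA, hB⟩)
  obtain ⟨y, hy, hyr⟩ := intermediate_value_Ioo' hbc (hcont _)
    (show (0:ℝ) ∈ Set.Ioo (F ((1+u)/6)) (F (1/2)) from ⟨hC, hB⟩)
  obtain ⟨z, hz, hzr⟩ := intermediate_value_Ioo hcd (hcont _)
    (show (0:ℝ) ∈ Set.Ioo (F ((1+u)/6)) (F (u+1)) from ⟨hC, hD⟩)
  refine ⟨x, y, z, ?_, ?_, ?_, ?_⟩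
  · exact ne_of_lt (lt_trans hx.2 hy.1)
  · exact ne_of_lt (lt_trans (lt_trans hx.2 hy.1) (lt_trans hy.2 hz.1))
  · exact ne_of_lt (lt_trans hy.2 hz.1)
  · rintro t (rfl | rfl | rfl)
    · exact hxr
    · exact hyr
    · exact hzr
end

section
/- For δ ∈ ℝ with 0 ≤ δ ≤ δ₀, where δ₀ is the unique real root of δ³ + 24δ² + 144δ − 32 = 0, the cubic λ³ + (δ−2)λ² − 6δλ + 12δ has three real roots (counted with multiplicity). -/
/-- For `0 ≤ δ ≤ δ₀`, where `δ₀` is the unique real root of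
`δ³ + 24δ² + 144δ - 32 = 0`, the cubic `λ³ + (δ-2)λ² - 6δλ + 12δ` has three real
roots counted with multiplicity. -/
theorem stmt_19 (δ₀ : ℝ)
    (hroot : δ₀ ^ 3 + 24 * δ₀ ^ 2 + 144 * δ₀ - 32 = 0)
    (huniq : ∀ x : ℝ, x ^ 3 + 24 * x ^ 2 + 144 * x - 32 = 0 → x = δ₀)
    (δ : ℝ) (hδ : 0 ≤ δ ∧ δ ≤ δ₀) :
    ∃ a b c : ℝ, ∀ lam : ℝ,
      lam ^ 3 + (δ - 2) * lam ^ 2 - 6 * δ * lam + 12 * δ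
        = (lam - a) * (lam - b) * (lam - c) := by
  obtain ⟨hδ0, hδ1⟩ := hδ
  have hd0pos : 0 < δ₀ := by nlinarith [sq_nonneg (δ₀ + 12)]
  -- find a real root `r` of the cubic by the intermediate value theorem
  have hcont : ContinuousOn (fun x : ℝ => x ^ 3 + (δ - 2) * x ^ 2 - 6 * δ * x + 12 * δ)
      (Set.Icc (-10 : ℝ) 10) := by fun_prop
  have hmem : (0 : ℝ) ∈ Set.Icc
      ((fun x : ℝ => x ^ 3 + (δ - 2) * x ^ 2 - 6 * δ * x + 12 * δ) (-10))
      ((fun x : ℝ => x ^ 3 + (δ - 2) * x ^ 2 - 6 * δ * x + 12 * δ) 10) := by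
    constructor
    · simp only
      nlinarith [hδ0, hδ1, hd0pos, hroot]
    · simp only
      nlinarith [hδ0]
  obtain ⟨r, -, hfr⟩ := intermediate_value_Icc (by norm_num : (-10 : ℝ) ≤ 10) hcont hmem
  simp only at hfr
  -- the discriminant of the cubic is nonnegative
  have h1 : 0 ≤ δ * (δ₀ - δ) := mul_nonneg hδ0 (sub_nonneg.mpr hδ1)
  have hQ : 0 ≤ δ ^ 2 + δ * δ₀ + δ₀ ^ 2 + 24 * δ + 24 * δ₀ + 144 := by
    nlinarith [mul_nonneg hδ0 hd0pos.le]
  have h2 : δ * (δ₀ ^ 3 + 24 * δ₀ ^ 2 + 144 * δ₀ - 32) = 0 := by rw [hroot, mul_zero]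
  have hΔ : 0 ≤ 384 * δ - 1728 * δ ^ 2 - 288 * δ ^ 3 - 12 * δ ^ 4 := by
    nlinarith [mul_nonneg h1 hQ, h2]
  set fp : ℝ := 3 * r ^ 2 + 2 * (δ - 2) * r - 6 * δ with hfp
  by_cases hcase : fp = 0
  · -- double root case
    refine ⟨r, r, 2 - δ - 2 * r, fun lam => ?_⟩
    linear_combination hfr + (lam - r) * hcase
  · -- quadratic factor has nonnegative discriminant
    set D2 : ℝ := (r + δ - 2) ^ 2 - 4 * (r ^ 2 + (δ - 2) * r - 6 * δ) with hD2def
    have key : fp ^ 2 * D2 = 384 * δ - 1728 * δ ^ 2 - 288 * δ ^ 3 - 12 * δ ^ 4 := by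
      linear_combination (-27 * r ^ 3 + (54 - 27 * δ) * r ^ 2 + 162 * δ * r
        + 4 * δ ^ 3 + 84 * δ ^ 2 + 156 * δ - 32) * hfr
    have hfp2 : 0 < fp ^ 2 :=
      lt_of_le_of_ne (sq_nonneg _) (Ne.symm (pow_ne_zero 2 hcase))
    have hD2 : 0 ≤ D2 := by
      by_contra h
      push_neg at h
      nlinarith [mul_pos hfp2 (neg_pos.mpr h)]
    have hs : Real.sqrt D2 ^ 2 = D2 := Real.sq_sqrt hD2
    refine ⟨r, (-(r + δ - 2) + Real.sqrt D2) / 2, (-(r + δ - 2) - Real.sqrt D2) / 2,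
      fun lam => ?_⟩
    linear_combination ((lam - r) / 4) * hs + hfr
end
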